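/- arXiv:1307.3970 — 4 statements merged into one kernel-verified Lean document; each statement's English description precedes it below -/
import Mathlib

section
/- Wigner's theorem (existence part): Let E be a complex Hilbert space and let f be a bijection of the projective space of E (the set of rays, i.e. the projectivization of E) such that f preserves transition probabilities: for all nonzero x, y in E and any representatives u of f([x]) and v of f([y]), one has |⟨u,v⟩|² / (‖u‖²‖v‖²) = |⟨x,y⟩|² / (‖x‖²‖y‖²). Then f is induced by an operator U on E which is either unitary (a ℂ-linear isometric bijection) or antiunitary (a conjugate-linear, i.e. semilinear with respect to complex conjugation, isometric bijection); that is, there exists such a U with f([x]) = [U x] for every nonzero x in E. -/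
open scoped InnerProductSpace ComplexConjugate
open Complex

namespace WignerAux

lemma eq_of_sq_eq {a b : ℝ} (ha : 0 ≤ a) (hb : 0 ≤ b) (h : a ^ 2 = b ^ 2) : a = b := by
  rw [← Real.sqrt_sq ha, ← Real.sqrt_sq hb, h]

lemma normsq_c (z : ℂ) : ‖z‖ ^ 2 = z.re ^ 2 + z.im ^ 2 := by
  rw [Complex.sq_norm, Complex.normSq_apply]; ring

lemma re_eq_of_norm_eq {r : ℝ} (hr : 0 < r) {a b : ℂ} (hab : ‖a‖ = ‖b‖)
    (h : ‖(r : ℂ) + a‖ = ‖(r : ℂ) + b‖) : a.re = b.re := by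
  have h1 := congrArg (· ^ 2) h
  have h2 := congrArg (· ^ 2) hab
  simp only [normsq_c] at h1 h2
  simp only [Complex.add_re, Complex.add_im, Complex.ofReal_re, Complex.ofReal_im,
    zero_add] at h1
  nlinarith

variable {E : Type*} [NormedAddCommGroup E] [InnerProductSpace ℂ E]

local notation "⟪" x ", " y "⟫" => @inner ℂ _ _ x y

lemma norm_comb3 {p q r : E} (hp : ‖p‖ = 1) (hq : ‖q‖ = 1) (hr : ‖r‖ = 1)
    (hpq : ⟪p, q⟫ = 0) (hpr : ⟪p, r⟫ = 0) (hqr : ⟪q, r⟫ = 0) (a b c : ℂ) :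
    ‖a • p + b • q + c • r‖ ^ 2 = ‖a‖ ^ 2 + ‖b‖ ^ 2 + ‖c‖ ^ 2 := by
  have hqp : ⟪q, p⟫ = 0 := by rw [← inner_conj_symm, hpq, map_zero]
  have hrp : ⟪r, p⟫ = 0 := by rw [← inner_conj_symm, hpr, map_zero]
  have hrq : ⟪r, q⟫ = 0 := by rw [← inner_conj_symm, hqr, map_zero]
  have key2 : (⟪a • p + b • q + c • r, a • p + b • q + c • r⟫ : ℂ)
      = ((‖a‖ ^ 2 + ‖b‖ ^ 2 + ‖c‖ ^ 2 : ℝ) : ℂ) := by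
    simp only [inner_add_left, inner_add_right, inner_smul_left, inner_smul_right]
    simp only [hpq, hpr, hqr, hqp, hrp, hrq, inner_self_eq_norm_sq_to_K, hp, hq, hr,
      mul_zero, zero_mul, add_zero, zero_add, Complex.ofReal_one, one_pow, mul_one]
    have hz : ∀ z : ℂ, z * ((starRingEnd ℂ) z * ((1 : ℂ)) ^ 2) = ((‖z‖ ^ 2 : ℝ) : ℂ) := by
      intro z
      rw [one_pow, mul_one, Complex.mul_conj]
      norm_cast
      rw [Complex.normSq_eq_norm_sq]
    push_cast at hz ⊢
    rw [hz, hz, hz]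
    try push_cast
    try ring
  have h3 := congrArg Complex.re key2
  rw [inner_self_eq_norm_sq_to_K] at key2
  have h4 : (((‖a • p + b • q + c • r‖ : ℝ) : ℂ)) ^ 2
      = ((‖a‖ ^ 2 + ‖b‖ ^ 2 + ‖c‖ ^ 2 : ℝ) : ℂ) := key2
  exact_mod_cast h4

lemma norm_comb2 {p q : E} (hp : ‖p‖ = 1) (hq : ‖q‖ = 1) (hpq : ⟪p, q⟫ = 0) (a b : ℂ) :
    ‖a • p + b • q‖ ^ 2 = ‖a‖ ^ 2 + ‖b‖ ^ 2 := by
  have hqp : ⟪q, p⟫ = 0 := by rw [← inner_conj_symm, hpq, map_zero]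
  have key2 : (⟪a • p + b • q, a • p + b • q⟫ : ℂ)
      = ((‖a‖ ^ 2 + ‖b‖ ^ 2 : ℝ) : ℂ) := by
    simp only [inner_add_left, inner_add_right, inner_smul_left, inner_smul_right]
    simp only [hpq, hqp, inner_self_eq_norm_sq_to_K, hp, hq,
      mul_zero, zero_mul, add_zero, zero_add, Complex.ofReal_one, one_pow, mul_one]
    have hz : ∀ z : ℂ, z * ((starRingEnd ℂ) z * ((1 : ℂ)) ^ 2) = ((‖z‖ ^ 2 : ℝ) : ℂ) := by
      intro z
      rw [one_pow, mul_one, Complex.mul_conj]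
      norm_cast
      rw [Complex.normSq_eq_norm_sq]
    push_cast at hz ⊢
    rw [hz, hz]
    try push_cast
    try ring
  have h3 := congrArg Complex.re key2
  rw [inner_self_eq_norm_sq_to_K] at key2
  have h4 : (((‖a • p + b • q‖ : ℝ) : ℂ)) ^ 2 = ((‖a‖ ^ 2 + ‖b‖ ^ 2 : ℝ) : ℂ) := key2
  exact_mod_cast h4

lemma conj_eq' (z : ℂ) :
    ((z.re : ℝ) : ℂ) + ((z.im : ℝ) : ℂ) * -Complex.I = (starRingEnd ℂ) z := by
  apply Complex.ext <;> simp

lemma ne_zero_of_normsq {x : E} {t : ℝ} (ht : 0 < t) (h : ‖x‖ ^ 2 = t) : x ≠ 0 := by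
  intro h0
  rw [h0] at h
  simp at h
  exact absurd h.symm (ne_of_gt ht)

end WignerAux

open WignerAux

set_option maxHeartbeats 2000000 in
/-- **Wigner's theorem (existence part).**
Let `E` be a complex Hilbert space and `f` a bijection of the projective space of `E`
(the set of rays) preserving transition probabilities:
for all nonzero `x, y` and any representatives `u` of `f[x]`, `v` of `f[y]`,
`|⟨u,v⟩|²/(‖u‖²‖v‖²) = |⟨x,y⟩|²/(‖x‖²‖y‖²)`.
Then `f` is induced by a unitary (ℂ-linear isometric bijection) or antiunitary
(conjugate-linear isometric bijection) operator `U` of `E`. -/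
theorem wigner_existence
    {E : Type*} [NormedAddCommGroup E] [InnerProductSpace ℂ E] [CompleteSpace E]
    (f : Projectivization ℂ E → Projectivization ℂ E)
    (hf : Function.Bijective f)
    (hprob : ∀ (x y u v : E) (hx : x ≠ 0) (hy : y ≠ 0) (hu : u ≠ 0) (hv : v ≠ 0),
      f (Projectivization.mk ℂ x hx) = Projectivization.mk ℂ u hu →
      f (Projectivization.mk ℂ y hy) = Projectivization.mk ℂ v hv →
      ‖(inner ℂ u v : ℂ)‖ ^ 2 / (‖u‖ ^ 2 * ‖v‖ ^ 2)
        = ‖(inner ℂ x y : ℂ)‖ ^ 2 / (‖x‖ ^ 2 * ‖y‖ ^ 2)) :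
    (∃ U : E ≃ₗᵢ[ℂ] E, ∀ (x : E) (hx : x ≠ 0), ∃ hUx : U x ≠ 0,
        f (Projectivization.mk ℂ x hx) = Projectivization.mk ℂ (U x) hUx) ∨
    (∃ U : E ≃ₛₗᵢ[starRingEnd ℂ] E, ∀ (x : E) (hx : x ≠ 0), ∃ hUx : U x ≠ 0,
        f (Projectivization.mk ℂ x hx) = Projectivization.mk ℂ (U x) hUx) := by
  classical
  rcases subsingleton_or_nontrivial E with hE | hE
  · exact Or.inl ⟨LinearIsometryEquiv.refl ℂ E,
      fun x hx => absurd (Subsingleton.elim x 0) hx⟩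
  obtain ⟨S, b, -⟩ := exists_hilbertBasis ℂ E
  set e : S → E := ⇑b with he
  have henorm : ∀ i : S, ‖e i‖ = 1 := b.orthonormal.1
  have heorth : ∀ i j : S, i ≠ j → ⟪e i, e j⟫_ℂ = 0 := fun i j h => b.orthonormal.2 h
  have hene : ∀ i : S, e i ≠ 0 := fun i => by
    intro h0; have := henorm i; rw [h0, norm_zero] at this; norm_num at this
  have heself : ∀ i : S, ⟪e i, e i⟫_ℂ = 1 := fun i => by
    rw [inner_self_eq_norm_sq_to_K, henorm i]; norm_num
  have hzero : ∀ z : E, (∀ i : S, ⟪e i, z⟫_ℂ = 0) → z = 0 := by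
    intro z hz
    have h1 : b.repr z = 0 := by
      apply lp.ext
      funext i
      simpa [b.repr_apply_apply] using hz i
    exact b.repr.map_eq_zero_iff.mp h1
  have hSne : Nonempty S := by
    by_contra h
    have hall : ∀ z : E, z = 0 := fun z => hzero z (fun i => absurd ⟨i⟩ h)
    obtain ⟨x, y, hxy⟩ := hE
    exact hxy ((hall x).trans (hall y).symm)
  obtain ⟨i₀⟩ := hSne
  -- the probability-preservation in product form
  have hP : ∀ (x y u v : E) (hx : x ≠ 0) (hy : y ≠ 0) (hu : u ≠ 0) (hv : v ≠ 0),
      f (Projectivization.mk ℂ x hx) = Projectivization.mk ℂ u hu →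
      f (Projectivization.mk ℂ y hy) = Projectivization.mk ℂ v hv →
      ‖⟪u, v⟫_ℂ‖ * (‖x‖ * ‖y‖) = ‖⟪x, y⟫_ℂ‖ * (‖u‖ * ‖v‖) := by
    intro x y u v hx hy hu hv h1 h2
    have hEq := hprob x y u v hx hy hu hv h1 h2
    have hxp : (0:ℝ) < ‖x‖ := norm_pos_iff.mpr hx
    have hyp : (0:ℝ) < ‖y‖ := norm_pos_iff.mpr hy
    have hup : (0:ℝ) < ‖u‖ := norm_pos_iff.mpr hu
    have hvp : (0:ℝ) < ‖v‖ := norm_pos_iff.mpr hv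
    rw [div_eq_div_iff (by positivity) (by positivity)] at hEq
    refine eq_of_sq_eq (by positivity) (by positivity) ?_
    ring_nf at hEq ⊢
    linarith
  have hmks : ∀ (x : E) (hx : x ≠ 0) (α : ℂ) (hα : α ≠ 0),
      Projectivization.mk ℂ (α • x) (smul_ne_zero hα hx) = Projectivization.mk ℂ x hx := by
    intro x hx α hα
    rw [Projectivization.mk_eq_mk_iff]
    exact ⟨Units.mk0 α hα, rfl⟩
  have hRep1 : ∀ (x : E) (hx : x ≠ 0), ∃ (y : E) (hy : y ≠ 0),
      f (Projectivization.mk ℂ x hx) = Projectivization.mk ℂ y hy ∧ ‖y‖ = ‖x‖ := by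
    intro x hx
    set p := f (Projectivization.mk ℂ x hx)
    have hrep : p.rep ≠ 0 := p.rep_nonzero
    have hrp : (0:ℝ) < ‖p.rep‖ := norm_pos_iff.mpr hrep
    have hxp : (0:ℝ) < ‖x‖ := norm_pos_iff.mpr hx
    have hαne : ((‖x‖ / ‖p.rep‖ : ℝ) : ℂ) ≠ 0 := by
      simp only [ne_eq, Complex.ofReal_eq_zero]
      positivity
    refine ⟨((‖x‖ / ‖p.rep‖ : ℝ) : ℂ) • p.rep, smul_ne_zero hαne hrep, ?_, ?_⟩
    · rw [hmks p.rep p.rep_nonzero _ hαne, p.mk_rep]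
    · rw [norm_smul]
      simp only [Complex.norm_real, Real.norm_eq_abs]
      rw [abs_of_pos (by positivity)]
      field_simp
  have hTest : ∀ (x y t wt : E) (hx : x ≠ 0) (hy : y ≠ 0) (ht : t ≠ 0) (hwt : wt ≠ 0),
      f (Projectivization.mk ℂ x hx) = Projectivization.mk ℂ y hy →
      f (Projectivization.mk ℂ t ht) = Projectivization.mk ℂ wt hwt →
      ‖y‖ = ‖x‖ → ‖wt‖ = ‖t‖ → ‖⟪wt, y⟫_ℂ‖ = ‖⟪t, x⟫_ℂ‖ := by
    intro x y t wt hx hy ht hwt h1 h2 hnx hnt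
    have := hP t x wt y ht hx hwt hy h2 h1
    rw [hnx, hnt] at this
    have hxp : (0:ℝ) < ‖x‖ := norm_pos_iff.mpr hx
    have htp : (0:ℝ) < ‖t‖ := norm_pos_iff.mpr ht
    exact mul_right_cancel₀ (by positivity) this
  have hRep2 : ∀ (x : E) (hx : x ≠ 0) (k : S) (u : E) (hu : u ≠ 0), ‖u‖ = 1 →
      f (Projectivization.mk ℂ (e k) (hene k)) = Projectivization.mk ℂ u hu →
      ⟪e k, x⟫_ℂ ≠ 0 →
      ∃ (y : E) (hy : y ≠ 0), f (Projectivization.mk ℂ x hx) = Projectivization.mk ℂ y hy ∧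
        ‖y‖ = ‖x‖ ∧ ⟪u, y⟫_ℂ = ((‖⟪e k, x⟫_ℂ‖ : ℝ) : ℂ) := by
    intro x hx k u hu hunorm hfu hk
    obtain ⟨y₀, hy₀, hfy₀, hny₀⟩ := hRep1 x hx
    have hc : ‖⟪u, y₀⟫_ℂ‖ = ‖⟪e k, x⟫_ℂ‖ :=
      hTest x y₀ (e k) u hx hy₀ (hene k) hu hfy₀ hfu hny₀ (by rw [hunorm, henorm k])
    set c := ⟪u, y₀⟫_ℂ with hcdef
    have hcne : c ≠ 0 := by
      intro h0
      rw [h0, norm_zero] at hc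
      exact hk (norm_eq_zero.mp hc.symm)
    have hαne : ((‖c‖ : ℝ) : ℂ) / c ≠ 0 := by
      apply div_ne_zero _ hcne
      simp only [ne_eq, Complex.ofReal_eq_zero, norm_eq_zero]
      exact hcne
    refine ⟨(((‖c‖ : ℝ) : ℂ) / c) • y₀, smul_ne_zero hαne hy₀, ?_, ?_, ?_⟩
    · rw [hmks y₀ hy₀ _ hαne]; exact hfy₀
    · rw [norm_smul, ← hny₀]
      have : ‖((‖c‖ : ℝ) : ℂ) / c‖ = 1 := by
        rw [norm_div]
        simp only [Complex.norm_real, Real.norm_eq_abs, abs_norm]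
        field_simp
      rw [this, one_mul]
    · rw [inner_smul_right, ← hcdef, div_mul_cancel₀ _ hcne, hc]
  -- choose unit representatives of the images of the basis rays
  have hv0 : ∀ i : S, ∃ (vi : E) (h : vi ≠ 0),
      f (Projectivization.mk ℂ (e i) (hene i)) = Projectivization.mk ℂ vi h ∧ ‖vi‖ = 1 := by
    intro i
    obtain ⟨y, hy, hfy, hny⟩ := hRep1 (e i) (hene i)
    exact ⟨y, hy, hfy, by rw [hny, henorm i]⟩
  choose v hvne hvf hvnorm using hv0
  have hvorth : ∀ i j : S, i ≠ j → ⟪v i, v j⟫_ℂ = 0 := by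
    intro i j hij
    have := hTest (e j) (v j) (e i) (v i) (hene j) (hvne j) (hene i) (hvne i)
      (hvf j) (hvf i) (by rw [hvnorm j, henorm j]) (by rw [hvnorm i, henorm i])
    rw [heorth i j hij, norm_zero] at this
    exact norm_eq_zero.mp this
  have hvtotal : ∀ z : E, (∀ i : S, ⟪v i, z⟫_ℂ = 0) → z = 0 := by
    intro z hz
    by_contra hz0
    obtain ⟨p, hp⟩ := hf.2 (Projectivization.mk ℂ z hz0)
    have hprep : f (Projectivization.mk ℂ p.rep p.rep_nonzero)
        = Projectivization.mk ℂ z hz0 := by rw [p.mk_rep]; exact hp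
    have hrep0 : p.rep = 0 := by
      apply hzero
      intro i
      have := hP (e i) p.rep (v i) z (hene i) p.rep_nonzero (hvne i) hz0 (hvf i) hprep
      rw [hz i, norm_zero, zero_mul] at this
      have hpos : (0:ℝ) < ‖v i‖ * ‖z‖ := by
        have := norm_pos_iff.mpr (hvne i)
        have := norm_pos_iff.mpr hz0
        positivity
      have h0 : ‖⟪e i, p.rep⟫_ℂ‖ = 0 := by
        by_contra hne
        have : (0:ℝ) < ‖⟪e i, p.rep⟫_ℂ‖ * (‖v i‖ * ‖z‖) := by
          have := (norm_nonneg (⟪e i, p.rep⟫_ℂ)).lt_of_ne (Ne.symm hne)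
          positivity
        linarith
      exact norm_eq_zero.mp h0
    exact p.rep_nonzero hrep0
  have hvext : ∀ y z : E, (∀ i : S, ⟪v i, y⟫_ℂ = ⟪v i, z⟫_ℂ) → y = z := by
    intro y z h
    have h0 : y - z = 0 := hvtotal (y - z) (fun i => by rw [inner_sub_right, h i, sub_self])
    exact sub_eq_zero.mp h0
  have hvself : ∀ i : S, ⟪v i, v i⟫_ℂ = 1 := fun i => by
    rw [inner_self_eq_norm_sq_to_K, hvnorm i]; norm_num
  -- the one-dimensional case
  by_cases hdim : ∀ i : S, i = i₀
  · left
    have hxi : ∀ z : E, z = ⟪e i₀, z⟫_ℂ • e i₀ := by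
      intro z
      have h0 : z - ⟪e i₀, z⟫_ℂ • e i₀ = 0 := by
        apply hzero
        intro i
        rw [hdim i, inner_sub_right, inner_smul_right, heself i₀, mul_one, sub_self]
      exact (sub_eq_zero.mp h0)
    have hsing : ∀ p : Projectivization ℂ E, p = Projectivization.mk ℂ (e i₀) (hene i₀) := by
      intro p
      have hrep := p.rep_nonzero
      have hrw := hxi p.rep
      have hcne : ⟪e i₀, p.rep⟫_ℂ ≠ 0 := by
        intro h0; apply hrep; rw [hrw, h0, zero_smul]
      rw [← p.mk_rep, Projectivization.mk_eq_mk_iff]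
      exact ⟨Units.mk0 _ hcne, hrw.symm⟩
    refine ⟨LinearIsometryEquiv.refl ℂ E, fun x hx => ⟨by simpa using hx, ?_⟩⟩
    rw [hsing (f (Projectivization.mk ℂ x hx))]
    exact (hsing _).symm
  push_neg at hdim
  obtain ⟨i₁, hi₁⟩ := hdim
  -- norm computations for two- and three-term combinations
  have hE2 : ∀ (i j : S), i ≠ j → ∀ c : ℂ, ‖e i + c • e j‖ ^ 2 = 1 + ‖c‖ ^ 2 := by
    intro i j hij c
    simpa using norm_comb2 (henorm i) (henorm j) (heorth i j hij) 1 c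
  have hE2ne : ∀ (i j : S), i ≠ j → ∀ c : ℂ, e i + c • e j ≠ 0 := by
    intro i j hij c
    exact ne_zero_of_normsq (by positivity) (hE2 i j hij c)
  have hE3 : ∀ (i j l : S), i ≠ j → i ≠ l → j ≠ l → ∀ c d : ℂ,
      ‖e i + c • e j + d • e l‖ ^ 2 = 1 + ‖c‖ ^ 2 + ‖d‖ ^ 2 := by
    intro i j l hij hil hjl c d
    simpa using norm_comb3 (henorm i) (henorm j) (henorm l)
      (heorth i j hij) (heorth i l hil) (heorth j l hjl) 1 c d
  have hE3ne : ∀ (i j l : S), i ≠ j → i ≠ l → j ≠ l → ∀ c d : ℂ,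
      e i + c • e j + d • e l ≠ 0 := by
    intro i j l hij hil hjl c d
    exact ne_zero_of_normsq (by positivity) (hE3 i j l hij hil hjl c d)
  -- inner products of basis vectors with two-term combinations
  have hECoeff : ∀ (i j : S), i ≠ j → ∀ c : ℂ,
      ⟪e i, e i + c • e j⟫_ℂ = 1 ∧ ⟪e j, e i + c • e j⟫_ℂ = c ∧
      ∀ l : S, l ≠ i → l ≠ j → ⟪e l, e i + c • e j⟫_ℂ = 0 := by
    intro i j hij c
    refine ⟨?_, ?_, ?_⟩
    · rw [inner_add_right, inner_smul_right, heself i, heorth i j hij, mul_zero, add_zero]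
    · rw [inner_add_right, inner_smul_right, heself j, heorth j i (Ne.symm hij), mul_one,
        zero_add]
    · intro l hli hlj
      rw [inner_add_right, inner_smul_right, heorth l i hli, heorth l j hlj, mul_zero,
        add_zero]
  -- phase correction
  have hlam : ∀ i : S, ∃ lam : ℂ, ‖lam‖ = 1 ∧ (i = i₀ → lam = 1) ∧
      (∀ hne : i ≠ i₀, ∀ (hx : e i₀ + (1:ℂ) • e i ≠ 0) (hwt : v i₀ + lam • v i ≠ 0),
        f (Projectivization.mk ℂ (e i₀ + (1:ℂ) • e i) hx)
          = Projectivization.mk ℂ (v i₀ + lam • v i) hwt) := by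
    intro i
    by_cases hi : i = i₀
    · exact ⟨1, by norm_num, fun _ => rfl, fun hne => absurd hi hne⟩
    · obtain ⟨hc1, hc2, hc3⟩ := hECoeff i₀ i (Ne.symm hi) 1
      have hxne : e i₀ + (1:ℂ) • e i ≠ 0 := hE2ne i₀ i (Ne.symm hi) 1
      obtain ⟨y, hy, hfy, hny, hcy⟩ := hRep2 (e i₀ + (1:ℂ) • e i) hxne i₀ (v i₀) (hvne i₀)
        (hvnorm i₀) (hvf i₀) (by rw [hc1]; exact one_ne_zero)
      rw [hc1] at hcy
      simp only [norm_one, Complex.ofReal_one] at hcy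
      have hd : ‖⟪v i, y⟫_ℂ‖ = 1 := by
        have := hTest _ y (e i) (v i) hxne hy (hene i) (hvne i) hfy (hvf i) hny
          (by rw [hvnorm i, henorm i])
        rw [hc2] at this
        rw [this, norm_one]
      have hoth : ∀ l : S, l ≠ i₀ → l ≠ i → ⟪v l, y⟫_ℂ = 0 := by
        intro l hl0 hli
        have := hTest _ y (e l) (v l) hxne hy (hene l) (hvne l) hfy (hvf l) hny
          (by rw [hvnorm l, henorm l])
        rw [hc3 l hl0 hli, norm_zero] at this
        exact norm_eq_zero.mp this
      have hyeq : y = v i₀ + ⟪v i, y⟫_ℂ • v i := by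
        apply hvext
        intro j
        by_cases hj0 : j = i₀
        · rw [hj0, hcy, inner_add_right, inner_smul_right, hvself i₀,
            hvorth i₀ i (Ne.symm hi), mul_zero, add_zero]
        · by_cases hji : j = i
          · rw [hji, inner_add_right, inner_smul_right, hvself i, hvorth i i₀ (by
              rw [← hji]; exact hj0), mul_one, zero_add]
          · rw [hoth j hj0 hji, inner_add_right, inner_smul_right, hvorth j i₀ hj0,
              hvorth j i hji, mul_zero, add_zero]
      refine ⟨⟪v i, y⟫_ℂ, hd, fun h => absurd h hi, fun hne hx hwt => ?_⟩
      rw [hfy]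
      rw [Projectivization.mk_eq_mk_iff]
      exact ⟨1, by rw [one_smul]; exact hyeq.symm⟩
  choose lam hlamnorm hlam0 hlamf using hlam
  have hlamne : ∀ i : S, lam i ≠ 0 := fun i => by
    intro h0; have := hlamnorm i; rw [h0, norm_zero] at this; norm_num at this
  obtain ⟨w, hwdef⟩ : ∃ w : S → E, w = fun i => lam i • v i := ⟨_, rfl⟩
  have hwapp : ∀ i : S, w i = lam i • v i := fun i => by rw [hwdef]
  have hwne : ∀ i : S, w i ≠ 0 := fun i => by
    rw [hwapp i]; exact smul_ne_zero (hlamne i) (hvne i)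
  have hwnorm : ∀ i : S, ‖w i‖ = 1 := fun i => by
    rw [hwapp i, norm_smul, hlamnorm i, hvnorm i, mul_one]
  have hworth : ∀ i j : S, i ≠ j → ⟪w i, w j⟫_ℂ = 0 := by
    intro i j hij
    rw [hwapp i, hwapp j, inner_smul_left, inner_smul_right, hvorth i j hij,
      mul_zero, mul_zero]
  have hwself : ∀ i : S, ⟪w i, w i⟫_ℂ = 1 := fun i => by
    rw [inner_self_eq_norm_sq_to_K, hwnorm i]; norm_num
  have hwf : ∀ i : S, f (Projectivization.mk ℂ (e i) (hene i))
      = Projectivization.mk ℂ (w i) (hwne i) := by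
    intro i
    rw [hvf i]
    rw [Projectivization.mk_eq_mk_iff]
    exact ⟨Units.mk0 (lam i)⁻¹ (inv_ne_zero (hlamne i)), by
      show ((lam i)⁻¹ : ℂ) • w i = v i
      rw [hwapp i, smul_smul, inv_mul_cancel₀ (hlamne i), one_smul]⟩
  have hwtotal : ∀ z : E, (∀ i : S, ⟪w i, z⟫_ℂ = 0) → z = 0 := by
    intro z hz
    apply hvtotal
    intro i
    have := hz i
    rw [hwapp i, inner_smul_left] at this
    rcases mul_eq_zero.mp this with h | h
    · exact absurd h (by simpa using hlamne i)
    · exact h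
  have hwext : ∀ y z : E, (∀ i : S, ⟪w i, y⟫_ℂ = ⟪w i, z⟫_ℂ) → y = z := by
    intro y z h
    have h0 : y - z = 0 := hwtotal (y - z) (fun i => by rw [inner_sub_right, h i, sub_self])
    exact sub_eq_zero.mp h0
  have hW2 : ∀ (i j : S), i ≠ j → ∀ c : ℂ, ‖w i + c • w j‖ ^ 2 = 1 + ‖c‖ ^ 2 := by
    intro i j hij c
    simpa using norm_comb2 (hwnorm i) (hwnorm j) (hworth i j hij) 1 c
  have hW2ne : ∀ (i j : S), i ≠ j → ∀ c : ℂ, w i + c • w j ≠ 0 := by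
    intro i j hij c
    exact ne_zero_of_normsq (by positivity) (hW2 i j hij c)
  have hW3 : ∀ (i j l : S), i ≠ j → i ≠ l → j ≠ l → ∀ c d : ℂ,
      ‖w i + c • w j + d • w l‖ ^ 2 = 1 + ‖c‖ ^ 2 + ‖d‖ ^ 2 := by
    intro i j l hij hil hjl c d
    simpa using norm_comb3 (hwnorm i) (hwnorm j) (hwnorm l)
      (hworth i j hij) (hworth i l hil) (hworth j l hjl) 1 c d
  have hW3ne : ∀ (i j l : S), i ≠ j → i ≠ l → j ≠ l → ∀ c d : ℂ,
      w i + c • w j + d • w l ≠ 0 := by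
    intro i j l hij hil hjl c d
    exact ne_zero_of_normsq (by positivity) (hW3 i j l hij hil hjl c d)
  have hL1 : ∀ i : S, i ≠ i₀ → ∀ (hx : e i₀ + (1:ℂ) • e i ≠ 0)
      (hwt : w i₀ + (1:ℂ) • w i ≠ 0),
      f (Projectivization.mk ℂ (e i₀ + (1:ℂ) • e i) hx)
        = Projectivization.mk ℂ (w i₀ + (1:ℂ) • w i) hwt := by
    intro i hne hx hwt
    have h1 : w i₀ + (1:ℂ) • w i = v i₀ + lam i • v i := by
      rw [hwapp i₀, hwapp i, hlam0 i₀ rfl, one_smul, one_smul]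
    have h2 := hlamf i hne hx (by rw [← h1]; exact hwt)
    rw [h2]
    rw [Projectivization.mk_eq_mk_iff]
    exact ⟨1, by rw [one_smul, h1]⟩
  -- coefficient transfer machinery
  have hCW : ∀ (x y : E) (hx : x ≠ 0) (hy : y ≠ 0),
      f (Projectivization.mk ℂ x hx) = Projectivization.mk ℂ y hy → ‖y‖ = ‖x‖ →
      ∀ l : S, ‖⟪w l, y⟫_ℂ‖ = ‖⟪e l, x⟫_ℂ‖ := by
    intro x y hx hy hfy hny l
    exact hTest x y (e l) (w l) hx hy (hene l) (hwne l) hfy (hwf l) hny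
      (by rw [hwnorm l, henorm l])
  have hVanish : ∀ (x y : E) (hx : x ≠ 0) (hy : y ≠ 0),
      f (Projectivization.mk ℂ x hx) = Projectivization.mk ℂ y hy → ‖y‖ = ‖x‖ →
      ∀ l : S, ⟪e l, x⟫_ℂ = 0 → ⟪w l, y⟫_ℂ = 0 := by
    intro x y hx hy hfy hny l hl
    have := hCW x y hx hy hfy hny l
    rw [hl, norm_zero] at this
    exact norm_eq_zero.mp this
  have hIW2 : ∀ (i j : S) (c : ℂ) (y : E),
      ⟪w i + c • w j, y⟫_ℂ = ⟪w i, y⟫_ℂ + (starRingEnd ℂ) c * ⟪w j, y⟫_ℂ := by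
    intro i j c y
    rw [inner_add_left, inner_smul_left]
  have hIE2 : ∀ (i j : S) (c : ℂ) (y : E),
      ⟪e i + c • e j, y⟫_ℂ = ⟪e i, y⟫_ℂ + (starRingEnd ℂ) c * ⟪e j, y⟫_ℂ := by
    intro i j c y
    rw [inner_add_left, inner_smul_left]
  have hIW3 : ∀ (i j l : S) (c d : ℂ) (y : E),
      ⟪w i + c • w j + d • w l, y⟫_ℂ
        = ⟪w i, y⟫_ℂ + (starRingEnd ℂ) c * ⟪w j, y⟫_ℂ
          + (starRingEnd ℂ) d * ⟪w l, y⟫_ℂ := by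
    intro i j l c d y
    rw [inner_add_left, inner_add_left, inner_smul_left, inner_smul_left]
  have hNM2 : ∀ (i j : S), i ≠ j → ∀ (c c' : ℂ), ‖c‖ = ‖c'‖ →
      ‖w i + c • w j‖ = ‖e i + c' • e j‖ := by
    intro i j hij c c' hcc
    refine eq_of_sq_eq (norm_nonneg _) (norm_nonneg _) ?_
    rw [hW2 i j hij c, hE2 i j hij c', hcc]
  have hNM3 : ∀ (i j l : S), i ≠ j → i ≠ l → j ≠ l → ∀ (c d c' d' : ℂ),
      ‖c‖ = ‖c'‖ → ‖d‖ = ‖d'‖ →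
      ‖w i + c • w j + d • w l‖ = ‖e i + c' • e j + d' • e l‖ := by
    intro i j l hij hil hjl c d c' d' hcc hdd
    refine eq_of_sq_eq (norm_nonneg _) (norm_nonneg _) ?_
    rw [hW3 i j l hij hil hjl c d, hE3 i j l hij hil hjl c' d', hcc, hdd]
  have hECoeff3 : ∀ (k i j : S), k ≠ i → k ≠ j → i ≠ j → ∀ c d : ℂ,
      ⟪e k, e k + c • e i + d • e j⟫_ℂ = 1 ∧ ⟪e i, e k + c • e i + d • e j⟫_ℂ = c ∧
      ⟪e j, e k + c • e i + d • e j⟫_ℂ = d ∧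
      ∀ l : S, l ≠ k → l ≠ i → l ≠ j → ⟪e l, e k + c • e i + d • e j⟫_ℂ = 0 := by
    intro k i j hki hkj hij c d
    refine ⟨?_, ?_, ?_, ?_⟩
    · rw [inner_add_right, inner_add_right, inner_smul_right, inner_smul_right,
        heself k, heorth k i hki, heorth k j hkj]
      ring
    · rw [inner_add_right, inner_add_right, inner_smul_right, inner_smul_right,
        heself i, heorth i k (Ne.symm hki), heorth i j hij]
      ring
    · rw [inner_add_right, inner_add_right, inner_smul_right, inner_smul_right,
        heself j, heorth j k (Ne.symm hkj), heorth j i (Ne.symm hij)]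
      ring
    · intro l hlk hli hlj
      rw [inner_add_right, inner_add_right, inner_smul_right, inner_smul_right,
        heorth l k hlk, heorth l i hli, heorth l j hlj]
      ring
  -- reconstruction of the image of a two-term combination
  have hRecon2 : ∀ (x y : E) (hx : x ≠ 0) (hy : y ≠ 0) (k i : S) (c : ℂ), k ≠ i →
      f (Projectivization.mk ℂ x hx) = Projectivization.mk ℂ y hy → ‖y‖ = ‖x‖ →
      (∀ l : S, l ≠ k → l ≠ i → ⟪e l, x⟫_ℂ = 0) →
      ⟪w k, y⟫_ℂ = 1 → ⟪w i, y⟫_ℂ = c → y = w k + c • w i := by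
    intro x y hx hy k i c hki hfy hny hvan hk hi
    apply hwext
    intro j
    by_cases hjk : j = k
    · rw [hjk, hk, inner_add_right, inner_smul_right, hwself k, hworth k i hki]
      ring
    · by_cases hji : j = i
      · rw [hji, hi, inner_add_right, inner_smul_right, hwself i,
          hworth i k (Ne.symm hki)]
        ring
      · rw [hVanish x y hx hy hfy hny j (hvan j hjk hji), inner_add_right,
          inner_smul_right, hworth j k hjk, hworth j i hji]
        ring
  have hRecon3 : ∀ (x y : E) (hx : x ≠ 0) (hy : y ≠ 0) (k i j : S) (c d : ℂ),
      k ≠ i → k ≠ j → i ≠ j →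
      f (Projectivization.mk ℂ x hx) = Projectivization.mk ℂ y hy → ‖y‖ = ‖x‖ →
      (∀ l : S, l ≠ k → l ≠ i → l ≠ j → ⟪e l, x⟫_ℂ = 0) →
      ⟪w k, y⟫_ℂ = 1 → ⟪w i, y⟫_ℂ = c → ⟪w j, y⟫_ℂ = d →
      y = w k + c • w i + d • w j := by
    intro x y hx hy k i j c d hki hkj hij hfy hny hvan hk hi hj
    apply hwext
    intro l
    by_cases hlk : l = k
    · rw [hlk, hk, inner_add_right, inner_add_right, inner_smul_right, inner_smul_right,
        hwself k, hworth k i hki, hworth k j hkj]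
      ring
    · by_cases hli : l = i
      · rw [hli, hi, inner_add_right, inner_add_right, inner_smul_right, inner_smul_right,
          hwself i, hworth i k (Ne.symm hki), hworth i j hij]
        ring
      · by_cases hlj : l = j
        · rw [hlj, hj, inner_add_right, inner_add_right, inner_smul_right,
            inner_smul_right, hwself j, hworth j k (Ne.symm hkj), hworth j i (Ne.symm hij)]
          ring
        · rw [hVanish x y hx hy hfy hny l (hvan l hlk hli hlj), inner_add_right,
            inner_add_right, inner_smul_right, inner_smul_right, hworth l k hlk,
            hworth l i hli, hworth l j hlj]
          ring
  -- determination helpers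
  have hdet1 : ∀ d : ℂ, ‖d‖ = 1 → ‖(1:ℂ) + d‖ = 2 → d = 1 := by
    intro d hd h
    have hre : d.re = 1 := by
      have h2 : ‖((1:ℝ):ℂ) + d‖ = ‖((1:ℝ):ℂ) + 1‖ := by
        rw [Complex.ofReal_one, h]; norm_num
      have := re_eq_of_norm_eq one_pos (by rw [hd]; norm_num) h2
      simpa using this
    have h3 : d.re ^ 2 + d.im ^ 2 = 1 := by rw [← normsq_c, hd]; norm_num
    have him : d.im = 0 := by nlinarith
    exact Complex.ext (by rw [hre]; simp) (by rw [him]; simp)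
  have hdetu : ∀ d c : ℂ, ‖d‖ = 1 → ‖c‖ = 1 →
      ‖(1:ℂ) + (starRingEnd ℂ) c * d‖ = 2 → d = c := by
    intro d c hd hc h
    have h1 : (starRingEnd ℂ) c * d = 1 := by
      apply hdet1
      · rw [norm_mul, RCLike.norm_conj, hd, hc, one_mul]
      · exact h
    have h2 : c * (starRingEnd ℂ) c = 1 := by
      rw [Complex.mul_conj]
      norm_cast
      rw [Complex.normSq_eq_norm_sq, hc]; norm_num
    calc d = c * (starRingEnd ℂ) c * d := by rw [h2, one_mul]
    _ = c * ((starRingEnd ℂ) c * d) := by ring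
    _ = c := by rw [h1, mul_one]
  -- the image of the ray of e i₀ + I • e i
  have htau0 : ∀ i : S, ∃ tau : ℂ, ‖tau‖ = 1 ∧ (tau = Complex.I ∨ tau = -Complex.I) ∧
      (∀ hne : i ≠ i₀, ∀ (hx : e i₀ + Complex.I • e i ≠ 0)
        (hwt : w i₀ + tau • w i ≠ 0),
        f (Projectivization.mk ℂ (e i₀ + Complex.I • e i) hx)
          = Projectivization.mk ℂ (w i₀ + tau • w i) hwt) := by
    intro i
    by_cases hi : i = i₀
    · exact ⟨Complex.I, by norm_num, Or.inl rfl, fun hne => absurd hi hne⟩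
    obtain ⟨hc1, hc2, hc3⟩ := hECoeff i₀ i (Ne.symm hi) Complex.I
    have hxne := hE2ne i₀ i (Ne.symm hi) Complex.I
    obtain ⟨y, hy, hfy, hny, hcy⟩ := hRep2 _ hxne i₀ (w i₀) (hwne i₀) (hwnorm i₀)
      (hwf i₀) (by rw [hc1]; exact one_ne_zero)
    rw [hc1] at hcy
    simp only [norm_one, Complex.ofReal_one] at hcy
    have hd : ‖⟪w i, y⟫_ℂ‖ = 1 := by
      have := hCW _ y hxne hy hfy hny i
      rw [hc2] at this
      rw [this]; norm_num
    have hyeq := hRecon2 _ y hxne hy i₀ i (⟪w i, y⟫_ℂ) (Ne.symm hi) hfy hny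
      (fun l hl0 hli => hc3 l hl0 hli) hcy rfl
    obtain ⟨hc1', hc2', hc3'⟩ := hECoeff i₀ i (Ne.symm hi) 1
    have htv := hTest _ y (e i₀ + (1:ℂ) • e i) (w i₀ + (1:ℂ) • w i) hxne hy
      (hE2ne i₀ i (Ne.symm hi) 1) (hW2ne i₀ i (Ne.symm hi) 1) hfy
      (hL1 i hi (hE2ne i₀ i (Ne.symm hi) 1) (hW2ne i₀ i (Ne.symm hi) 1)) hny
      (hNM2 i₀ i (Ne.symm hi) 1 1 rfl)
    rw [hIW2, hcy, map_one, one_mul] at htv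
    rw [hIE2, hc1, hc2, map_one, one_mul] at htv
    set d := ⟪w i, y⟫_ℂ with hddef
    have hre : d.re = 0 := by
      have h2 : ‖((1:ℝ):ℂ) + d‖ = ‖((1:ℝ):ℂ) + Complex.I‖ := by
        rw [Complex.ofReal_one]; exact htv
      have := re_eq_of_norm_eq one_pos (by rw [hd, Complex.norm_I]) h2
      simpa using this
    have h3 : d.re ^ 2 + d.im ^ 2 = 1 := by rw [← normsq_c, hd]; norm_num
    have him : d.im = 1 ∨ d.im = -1 := by
      rcases mul_eq_zero.mp (show (d.im - 1) * (d.im + 1) = 0 by nlinarith) with h | h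
      · left; linarith
      · right; linarith
    have hpm : d = Complex.I ∨ d = -Complex.I := by
      rcases him with h | h
      · left; exact Complex.ext (by rw [hre]; simp) (by rw [h]; simp)
      · right; exact Complex.ext (by rw [hre]; simp) (by rw [h]; simp)
    refine ⟨d, hd, hpm, fun hne hx hwt => ?_⟩
    rw [hfy, Projectivization.mk_eq_mk_iff]
    exact ⟨1, by rw [one_smul]; exact hyeq.symm⟩
  choose tau htaunorm htaupm htauf using htau0
  -- image of three-term real combinations
  have hL2 : ∀ i j : S, i ≠ i₀ → j ≠ i₀ → i ≠ j →
      ∀ (hx : e i₀ + (1:ℂ) • e i + (1:ℂ) • e j ≠ 0)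
        (hwt : w i₀ + (1:ℂ) • w i + (1:ℂ) • w j ≠ 0),
      f (Projectivization.mk ℂ (e i₀ + (1:ℂ) • e i + (1:ℂ) • e j) hx)
        = Projectivization.mk ℂ (w i₀ + (1:ℂ) • w i + (1:ℂ) • w j) hwt := by
    intro i j hi0 hj0 hij hx hwt
    obtain ⟨hc1, hc2, hc3, hc4⟩ := hECoeff3 i₀ i j (Ne.symm hi0) (Ne.symm hj0) hij 1 1
    obtain ⟨y, hy, hfy, hny, hcy⟩ := hRep2 _ hx i₀ (w i₀) (hwne i₀) (hwnorm i₀)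
      (hwf i₀) (by rw [hc1]; exact one_ne_zero)
    rw [hc1] at hcy
    simp only [norm_one, Complex.ofReal_one] at hcy
    have hdgen : ∀ l : S, l ≠ i₀ → (⟪e l, e i₀ + (1:ℂ) • e i + (1:ℂ) • e j⟫_ℂ = 1) →
        ⟪w l, y⟫_ℂ = 1 := by
      intro l hl0 hcl
      have hnl : ‖⟪w l, y⟫_ℂ‖ = 1 := by
        have := hCW _ y hx hy hfy hny l
        rw [hcl] at this
        rw [this]; norm_num
      obtain ⟨hd1, hd2, hd3⟩ := hECoeff i₀ l (Ne.symm hl0) 1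
      have htv := hTest _ y (e i₀ + (1:ℂ) • e l) (w i₀ + (1:ℂ) • w l) hx hy
        (hE2ne i₀ l (Ne.symm hl0) 1) (hW2ne i₀ l (Ne.symm hl0) 1) hfy
        (hL1 l hl0 (hE2ne i₀ l (Ne.symm hl0) 1) (hW2ne i₀ l (Ne.symm hl0) 1)) hny
        (hNM2 i₀ l (Ne.symm hl0) 1 1 rfl)
      rw [hIW2, hcy, map_one, one_mul] at htv
      rw [hIE2, hc1, map_one, one_mul, hcl] at htv
      apply hdet1 _ hnl
      rw [htv]; norm_num
    have hdi : ⟪w i, y⟫_ℂ = 1 := hdgen i hi0 hc2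
    have hdj : ⟪w j, y⟫_ℂ = 1 := hdgen j hj0 hc3
    have hyeq := hRecon3 _ y hx hy i₀ i j 1 1 (Ne.symm hi0) (Ne.symm hj0) hij hfy hny
      (fun l hl0 hli hlj => hc4 l hl0 hli hlj) hcy hdi hdj
    rw [hfy, Projectivization.mk_eq_mk_iff]
    exact ⟨1, by rw [one_smul]; exact hyeq.symm⟩
  -- image of e k + e i for k, i ≠ i₀
  have hL3 : ∀ k i : S, k ≠ i₀ → i ≠ i₀ → k ≠ i →
      ∀ (hx : e k + (1:ℂ) • e i ≠ 0) (hwt : w k + (1:ℂ) • w i ≠ 0),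
      f (Projectivization.mk ℂ (e k + (1:ℂ) • e i) hx)
        = Projectivization.mk ℂ (w k + (1:ℂ) • w i) hwt := by
    intro k i hk0 hi0 hki hx hwt
    obtain ⟨hc1, hc2, hc3⟩ := hECoeff k i hki 1
    obtain ⟨y, hy, hfy, hny, hcy⟩ := hRep2 _ hx k (w k) (hwne k) (hwnorm k)
      (hwf k) (by rw [hc1]; exact one_ne_zero)
    rw [hc1] at hcy
    simp only [norm_one, Complex.ofReal_one] at hcy
    have hnd : ‖⟪w i, y⟫_ℂ‖ = 1 := by
      have := hCW _ y hx hy hfy hny i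
      rw [hc2] at this
      rw [this]; norm_num
    have hv0 : ⟪w i₀, y⟫_ℂ = 0 :=
      hVanish _ y hx hy hfy hny i₀ (hc3 i₀ (Ne.symm hk0) (Ne.symm hi0))
    have htv := hTest _ y (e i₀ + (1:ℂ) • e k + (1:ℂ) • e i)
      (w i₀ + (1:ℂ) • w k + (1:ℂ) • w i) hx hy
      (hE3ne i₀ k i (Ne.symm hk0) (Ne.symm hi0) hki 1 1)
      (hW3ne i₀ k i (Ne.symm hk0) (Ne.symm hi0) hki 1 1) hfy
      (hL2 k i hk0 hi0 hki _ _) hny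
      (hNM3 i₀ k i (Ne.symm hk0) (Ne.symm hi0) hki 1 1 1 1 rfl rfl)
    rw [hIW3, hv0, hcy, map_one, one_mul, one_mul] at htv
    obtain ⟨hd1, hd2, hd3, hd4⟩ := hECoeff3 i₀ k i (Ne.symm hk0) (Ne.symm hi0) hki 1 1
    have hex : ⟪e i₀ + (1:ℂ) • e k + (1:ℂ) • e i, e k + (1:ℂ) • e i⟫_ℂ = 2 := by
      rw [inner_add_left, inner_add_left, inner_smul_left, inner_smul_left, hc1, hc2,
        hc3 i₀ (Ne.symm hk0) (Ne.symm hi0)]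
      simp
      norm_num
    rw [hex] at htv
    have hdi : ⟪w i, y⟫_ℂ = 1 := by
      apply hdet1 _ hnd
      rw [zero_add] at htv
      rw [htv]; norm_num
    have hyeq := hRecon2 _ y hx hy k i 1 hki hfy hny
      (fun l hlk hli => hc3 l hlk hli) hcy hdi
    rw [hfy, Projectivization.mk_eq_mk_iff]
    exact ⟨1, by rw [one_smul]; exact hyeq.symm⟩
  -- coherence of the phases tau
  have htaueq : ∀ i j : S, i ≠ i₀ → j ≠ i₀ → i ≠ j → tau i = tau j := by
    intro i j hi0 hj0 hij
    obtain ⟨hc1, hc2, hc3, hc4⟩ := hECoeff3 i₀ i j (Ne.symm hi0) (Ne.symm hj0) hij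
      Complex.I Complex.I
    have hx := hE3ne i₀ i j (Ne.symm hi0) (Ne.symm hj0) hij Complex.I Complex.I
    obtain ⟨y, hy, hfy, hny, hcy⟩ := hRep2 _ hx i₀ (w i₀) (hwne i₀) (hwnorm i₀)
      (hwf i₀) (by rw [hc1]; exact one_ne_zero)
    rw [hc1] at hcy
    simp only [norm_one, Complex.ofReal_one] at hcy
    have hdgen : ∀ l : S, l ≠ i₀ →
        (⟪e l, e i₀ + Complex.I • e i + Complex.I • e j⟫_ℂ = Complex.I) →
        ⟪w l, y⟫_ℂ = tau l := by
      intro l hl0 hcl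
      have hnl : ‖⟪w l, y⟫_ℂ‖ = 1 := by
        have := hCW _ y hx hy hfy hny l
        rw [hcl] at this
        rw [this]; norm_num
      have htv := hTest _ y (e i₀ + Complex.I • e l) (w i₀ + tau l • w l) hx hy
        (hE2ne i₀ l (Ne.symm hl0) Complex.I) (hW2ne i₀ l (Ne.symm hl0) (tau l)) hfy
        (htauf l hl0 (hE2ne i₀ l (Ne.symm hl0) Complex.I)
          (hW2ne i₀ l (Ne.symm hl0) (tau l))) hny
        (hNM2 i₀ l (Ne.symm hl0) (tau l) Complex.I (by rw [htaunorm l, Complex.norm_I]))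
      rw [hIW2, hcy] at htv
      obtain ⟨he1, he2, he3⟩ := hECoeff i₀ l (Ne.symm hl0) Complex.I
      rw [hIE2, hc1, hcl, Complex.conj_I] at htv
      have hrhs : (1 : ℂ) + -Complex.I * Complex.I = 2 := by
        rw [neg_mul, Complex.I_mul_I]; norm_num
      rw [hrhs] at htv
      apply hdetu _ _ hnl (htaunorm l)
      rw [htv]; norm_num
    have hdi : ⟪w i, y⟫_ℂ = tau i := hdgen i hi0 hc2
    have hdj : ⟪w j, y⟫_ℂ = tau j := hdgen j hj0 hc3
    -- test against the image of e i + e j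
    have htv := hTest _ y (e i + (1:ℂ) • e j) (w i + (1:ℂ) • w j) hx hy
      (hE2ne i j hij 1) (hW2ne i j hij 1) hfy
      (hL3 i j hi0 hj0 hij (hE2ne i j hij 1) (hW2ne i j hij 1)) hny
      (hNM2 i j hij 1 1 rfl)
    rw [hIW2, hdi, hdj, map_one, one_mul] at htv
    have hex : ⟪e i + (1:ℂ) • e j, e i₀ + Complex.I • e i + Complex.I • e j⟫_ℂ
        = 2 * Complex.I := by
      rw [inner_add_left, inner_smul_left, hc2, hc3]
      simp
      ring
    rw [hex] at htv
    have h2 : ‖tau i + tau j‖ = 2 := by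
      rw [htv, norm_mul, Complex.norm_I]
      norm_num
    rcases htaupm i with hpi | hpi <;> rcases htaupm j with hpj | hpj
    · rw [hpi, hpj]
    · exfalso; rw [hpi, hpj] at h2; simp at h2
    · exfalso; rw [hpi, hpj] at h2; simp at h2
    · rw [hpi, hpj]
  -- the global phase σ
  obtain ⟨σ, hσdef⟩ : ∃ s : ℂ, s = tau i₁ := ⟨_, rfl⟩
  have hσpm : σ = Complex.I ∨ σ = -Complex.I := by rw [hσdef]; exact htaupm i₁
  have hσnorm : ‖σ‖ = 1 := by rw [hσdef]; exact htaunorm i₁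
  have htauσ : ∀ i : S, i ≠ i₀ → tau i = σ := by
    intro i hi
    by_cases h : i = i₁
    · rw [h, hσdef]
    · rw [hσdef]; exact htaueq i i₁ hi hi₁ h
  have hτσ : ∀ i : S, i ≠ i₀ →
      ∀ (hx : e i₀ + Complex.I • e i ≠ 0) (hwt : w i₀ + σ • w i ≠ 0),
      f (Projectivization.mk ℂ (e i₀ + Complex.I • e i) hx)
        = Projectivization.mk ℂ (w i₀ + σ • w i) hwt := by
    intro i hi hx hwt
    have hwt' : w i₀ + tau i • w i ≠ 0 := by rw [htauσ i hi]; exact hwt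
    rw [htauf i hi hx hwt', Projectivization.mk_eq_mk_iff]
    exact ⟨1, by rw [one_smul, htauσ i hi]⟩
  -- the master pivot lemma
  have hM : ∀ (x : E) (hx : x ≠ 0) (k : S), (⟪e k, x⟫_ℂ).im = 0 → 0 < (⟪e k, x⟫_ℂ).re →
      (∀ i : S, i ≠ k → ⟪e i, x⟫_ℂ ≠ 0 →
        ∀ (ht : e k + (1:ℂ) • e i ≠ 0) (hwt : w k + (1:ℂ) • w i ≠ 0),
          f (Projectivization.mk ℂ (e k + (1:ℂ) • e i) ht)
            = Projectivization.mk ℂ (w k + (1:ℂ) • w i) hwt) →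
      (∀ i : S, i ≠ k → ⟪e i, x⟫_ℂ ≠ 0 →
        ∀ (ht : e k + Complex.I • e i ≠ 0) (hwt : w k + σ • w i ≠ 0),
          f (Projectivization.mk ℂ (e k + Complex.I • e i) ht)
            = Projectivization.mk ℂ (w k + σ • w i) hwt) →
      ∃ (y : E) (hy : y ≠ 0),
        f (Projectivization.mk ℂ x hx) = Projectivization.mk ℂ y hy ∧ ‖y‖ = ‖x‖ ∧
        ∀ i : S, ⟪w i, y⟫_ℂ
          = (((⟪e i, x⟫_ℂ).re : ℝ) : ℂ) + (((⟪e i, x⟫_ℂ).im : ℝ) : ℂ) * σ := by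
    intro x hx k him hre htest1 htest2
    obtain ⟨r, hr⟩ : ∃ r : ℝ, (⟪e k, x⟫_ℂ).re = r := ⟨_, rfl⟩
    rw [hr] at hre
    have hck : ⟪e k, x⟫_ℂ = ((r : ℝ) : ℂ) :=
      Complex.ext (by rw [hr, Complex.ofReal_re]) (by rw [him, Complex.ofReal_im])
    have hckne : ⟪e k, x⟫_ℂ ≠ 0 := by
      rw [hck]
      simpa using ne_of_gt hre
    obtain ⟨y, hy, hfy, hny, hcy⟩ := hRep2 x hx k (w k) (hwne k) (hwnorm k) (hwf k) hckne
    have hcy' : ⟪w k, y⟫_ℂ = ((r : ℝ) : ℂ) := by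
      rw [hcy, hck]
      simp only [Complex.norm_real, Real.norm_eq_abs]
      rw [abs_of_pos hre]
    refine ⟨y, hy, hfy, hny, ?_⟩
    intro i
    by_cases hik : i = k
    · rw [hik, hcy', hr, him]
      simp
    · by_cases hci : ⟪e i, x⟫_ℂ = 0
      · rw [hVanish x y hx hy hfy hny i hci, hci]
        simp
      · have hki : k ≠ i := fun h => hik h.symm
        have hnd : ‖⟪w i, y⟫_ℂ‖ = ‖⟪e i, x⟫_ℂ‖ := hCW x y hx hy hfy hny i
        have htv1 := hTest x y (e k + (1:ℂ) • e i) (w k + (1:ℂ) • w i) hx hy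
          (hE2ne k i hki 1) (hW2ne k i hki 1) hfy
          (htest1 i hik hci (hE2ne k i hki 1) (hW2ne k i hki 1)) hny
          (hNM2 k i hki 1 1 rfl)
        rw [hIW2, hcy', map_one, one_mul] at htv1
        have hex1 : ⟪e k + (1:ℂ) • e i, x⟫_ℂ
            = ((r : ℝ) : ℂ) + ⟪e i, x⟫_ℂ := by
          rw [hIE2, map_one, one_mul, ← hck]
        rw [hex1] at htv1
        have hre_eq := re_eq_of_norm_eq hre hnd htv1
        have htv2 := hTest x y (e k + Complex.I • e i) (w k + σ • w i) hx hy
          (hE2ne k i hki Complex.I) (hW2ne k i hki σ) hfy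
          (htest2 i hik hci (hE2ne k i hki Complex.I) (hW2ne k i hki σ)) hny
          (hNM2 k i hki σ Complex.I (by rw [hσnorm, Complex.norm_I]))
        rw [hIW2, hcy'] at htv2
        have hex2 : ⟪e k + Complex.I • e i, x⟫_ℂ
            = ((r : ℝ) : ℂ) + -Complex.I * ⟪e i, x⟫_ℂ := by
          rw [hIE2, Complex.conj_I, ← hck]
        rw [hex2] at htv2
        have hnd2 : ‖(starRingEnd ℂ) σ * ⟪w i, y⟫_ℂ‖ = ‖-Complex.I * ⟪e i, x⟫_ℂ‖ := by
          rw [norm_mul, norm_mul, RCLike.norm_conj, hσnorm, norm_neg, Complex.norm_I,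
            one_mul, one_mul, hnd]
        have him_eq := re_eq_of_norm_eq hre hnd2 htv2
        have hrhs_re : (-Complex.I * ⟪e i, x⟫_ℂ).re = (⟪e i, x⟫_ℂ).im := by
          simp [Complex.mul_re]
        rw [hrhs_re] at him_eq
        rcases hσpm with hσ | hσ
        · rw [hσ] at him_eq ⊢
          rw [Complex.conj_I] at him_eq
          have hlhs_re : (-Complex.I * ⟪w i, y⟫_ℂ).re = (⟪w i, y⟫_ℂ).im := by
            simp [Complex.mul_re]
          rw [hlhs_re] at him_eq
          refine Complex.ext ?_ ?_
          · rw [hre_eq]; simp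
          · rw [him_eq]; simp
        · rw [hσ] at him_eq ⊢
          have hconj : (starRingEnd ℂ) (-Complex.I) = Complex.I := by
            rw [map_neg, Complex.conj_I, neg_neg]
          rw [hconj] at him_eq
          have hlhs_re : (Complex.I * ⟪w i, y⟫_ℂ).re = -(⟪w i, y⟫_ℂ).im := by
            simp [Complex.mul_re]
          rw [hlhs_re] at him_eq
          refine Complex.ext ?_ ?_
          · rw [hre_eq]; simp
          · simp
            linarith
  -- image of e k + I e i for k, i ≠ i₀
  have hL5 : ∀ k i : S, k ≠ i₀ → i ≠ i₀ → k ≠ i →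
      ∀ (hx : e k + Complex.I • e i ≠ 0) (hwt : w k + σ • w i ≠ 0),
      f (Projectivization.mk ℂ (e k + Complex.I • e i) hx)
        = Projectivization.mk ℂ (w k + σ • w i) hwt := by
    intro k i hk0 hi0 hki hx hwt
    have hx' := hE3ne i₀ k i (Ne.symm hk0) (Ne.symm hi0) hki 1 Complex.I
    obtain ⟨hc1, hc2, hc3, hc4⟩ := hECoeff3 i₀ k i (Ne.symm hk0) (Ne.symm hi0) hki
      1 Complex.I
    obtain ⟨y, hy, hfy, hny, hcoef⟩ := hM _ hx' i₀ (by rw [hc1]; norm_num)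
      (by rw [hc1]; norm_num)
      (fun j hj hcj ht hwt' => hL1 j hj ht hwt')
      (fun j hj hcj ht hwt' => hτσ j hj ht hwt')
    have hyi0 : ⟪w i₀, y⟫_ℂ = 1 := by rw [hcoef i₀, hc1]; simp
    have hyk : ⟪w k, y⟫_ℂ = 1 := by rw [hcoef k, hc2]; simp
    have hyi : ⟪w i, y⟫_ℂ = σ := by rw [hcoef i, hc3]; simp
    have hyeq := hRecon3 _ y hx' hy i₀ k i 1 σ (Ne.symm hk0) (Ne.symm hi0) hki hfy hny
      (fun l h1 h2 h3 => hc4 l h1 h2 h3) hyi0 hyk hyi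
    have hwt3 := hW3ne i₀ k i (Ne.symm hk0) (Ne.symm hi0) hki 1 σ
    have hfx' : f (Projectivization.mk ℂ (e i₀ + (1:ℂ) • e k + Complex.I • e i) hx')
        = Projectivization.mk ℂ (w i₀ + (1:ℂ) • w k + σ • w i) hwt3 := by
      rw [hfy, Projectivization.mk_eq_mk_iff]
      exact ⟨1, by rw [one_smul]; exact hyeq.symm⟩
    obtain ⟨td1, td2, td3⟩ := hECoeff k i hki Complex.I
    obtain ⟨z, hz, hfz, hnz, hcz⟩ := hRep2 _ hx k (w k) (hwne k) (hwnorm k) (hwf k)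
      (by rw [td1]; exact one_ne_zero)
    rw [td1] at hcz
    simp only [norm_one, Complex.ofReal_one] at hcz
    have hnd : ‖⟪w i, z⟫_ℂ‖ = 1 := by
      have := hCW _ z hx hz hfz hnz i
      rw [td2] at this
      rw [this, Complex.norm_I]
    have hv0 : ⟪w i₀, z⟫_ℂ = 0 :=
      hVanish _ z hx hz hfz hnz i₀ (td3 i₀ (Ne.symm hk0) (Ne.symm hi0))
    have htv := hTest _ z (e i₀ + (1:ℂ) • e k + Complex.I • e i)
      (w i₀ + (1:ℂ) • w k + σ • w i) hx hz hx' hwt3 hfz hfx' hnz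
      (hNM3 i₀ k i (Ne.symm hk0) (Ne.symm hi0) hki 1 σ 1 Complex.I rfl
        (by rw [hσnorm, Complex.norm_I]))
    rw [hIW3, hv0, hcz, map_one, one_mul, zero_add] at htv
    have hex : ⟪e i₀ + (1:ℂ) • e k + Complex.I • e i, e k + Complex.I • e i⟫_ℂ = 2 := by
      rw [inner_add_left, inner_add_left, inner_smul_left, inner_smul_left, td1, td2,
        td3 i₀ (Ne.symm hk0) (Ne.symm hi0), Complex.conj_I]
      simp
      norm_num
    rw [hex] at htv
    have hd : ⟪w i, z⟫_ℂ = σ := by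
      apply hdetu _ _ hnd hσnorm
      rw [htv]; norm_num
    have hzeq := hRecon2 _ z hx hz k i σ hki hfz hnz
      (fun l h1 h2 => td3 l h1 h2) hcz hd
    rw [hfz, Projectivization.mk_eq_mk_iff]
    exact ⟨1, by rw [one_smul]; exact hzeq.symm⟩
  -- the main lemma: image of an arbitrary ray
  have hMain : ∀ (x : E) (hx : x ≠ 0), ∃ (y : E) (hy : y ≠ 0) (α : ℂ), α ≠ 0 ∧
      f (Projectivization.mk ℂ x hx) = Projectivization.mk ℂ y hy ∧
      ∀ i : S, ⟪w i, y⟫_ℂ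
        = (((⟪e i, α • x⟫_ℂ).re : ℝ) : ℂ) + (((⟪e i, α • x⟫_ℂ).im : ℝ) : ℂ) * σ := by
    intro x hx
    obtain ⟨k0, hk0ne⟩ : ∃ k : S, ⟪e k, x⟫_ℂ ≠ 0 := by
      by_contra h
      push_neg at h
      exact hx (hzero x h)
    by_cases h0 : ⟪e i₀, x⟫_ℂ = 0
    case neg =>
      -- pivot i₀
      obtain ⟨α, hα, hcα⟩ : ∃ α : ℂ, α ≠ 0 ∧
          ⟪e i₀, α • x⟫_ℂ = ((‖⟪e i₀, x⟫_ℂ‖ : ℝ) : ℂ) := by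
        refine ⟨((‖⟪e i₀, x⟫_ℂ‖ : ℝ) : ℂ) / ⟪e i₀, x⟫_ℂ,
          div_ne_zero (by simpa using h0) h0, ?_⟩
        rw [inner_smul_right, div_mul_cancel₀ _ h0]
      have hx' : α • x ≠ 0 := smul_ne_zero hα hx
      obtain ⟨y, hy, hfy, hny, hcoef⟩ := hM (α • x) hx' i₀
        (by rw [hcα, Complex.ofReal_im])
        (by rw [hcα, Complex.ofReal_re]; simpa using h0)
        (fun i hik hci ht hwt => hL1 i hik ht hwt)
        (fun i hik hci ht hwt => hτσ i hik ht hwt)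
      refine ⟨y, hy, α, hα, ?_, hcoef⟩
      rw [← hmks x hx α hα]
      exact hfy
    case pos =>
      have hk0i : k0 ≠ i₀ := fun h => hk0ne (by rw [h, h0])
      obtain ⟨α, hα, hcα⟩ : ∃ α : ℂ, α ≠ 0 ∧
          ⟪e k0, α • x⟫_ℂ = ((‖⟪e k0, x⟫_ℂ‖ : ℝ) : ℂ) := by
        refine ⟨((‖⟪e k0, x⟫_ℂ‖ : ℝ) : ℂ) / ⟪e k0, x⟫_ℂ,
          div_ne_zero (by simpa using hk0ne) hk0ne, ?_⟩
        rw [inner_smul_right, div_mul_cancel₀ _ hk0ne]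
      have hx' : α • x ≠ 0 := smul_ne_zero hα hx
      have hizero : ∀ i : S, ⟪e i, α • x⟫_ℂ ≠ 0 → i ≠ i₀ := by
        intro i hi hii
        apply hi
        rw [hii, inner_smul_right, h0, mul_zero]
      obtain ⟨y, hy, hfy, hny, hcoef⟩ := hM (α • x) hx' k0
        (by rw [hcα, Complex.ofReal_im])
        (by rw [hcα, Complex.ofReal_re]; simpa using hk0ne)
        (fun i hik hci ht hwt => hL3 k0 i hk0i (hizero i hci) (fun h => hik h.symm) ht hwt)
        (fun i hik hci ht hwt => hL5 k0 i hk0i (hizero i hci) (fun h => hik h.symm) ht hwt)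
      refine ⟨y, hy, α, hα, ?_, hcoef⟩
      rw [← hmks x hx α hα]
      exact hfy
  -- Hilbert basis from w and the operator U
  have hON : Orthonormal ℂ w := by
    rw [orthonormal_iff_ite]
    intro i j
    by_cases h : i = j
    · rw [if_pos h, h, hwself j]
    · rw [if_neg h]; exact hworth i j h
  have hbot : (Submodule.span ℂ (Set.range w))ᗮ = ⊥ := by
    rw [Submodule.eq_bot_iff]
    intro z hz
    apply hwtotal
    intro i
    exact (Submodule.mem_orthogonal _ z).mp hz (w i)
      (Submodule.subset_span (Set.mem_range_self i))
  obtain ⟨b', hb'c⟩ : ∃ b' : HilbertBasis S ℂ E, ⇑b' = w :=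
    ⟨HilbertBasis.mkOfOrthogonalEqBot hON hbot,
      HilbertBasis.coe_mkOfOrthogonalEqBot hON hbot⟩
  have hb'repr : ∀ (z : E) (i : S), b'.repr z i = ⟪w i, z⟫_ℂ := by
    intro z i
    rw [b'.repr_apply_apply, hb'c]
  have hbrepr : ∀ (z : E) (i : S), b.repr z i = ⟪e i, z⟫_ℂ := by
    intro z i
    rw [b.repr_apply_apply]
  rcases hσpm with hσ | hσ
  · left
    obtain ⟨U, hU⟩ : ∃ U : E ≃ₗᵢ[ℂ] E, ∀ z : E, U z = b'.repr.symm (b.repr z) :=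
      ⟨b.repr.trans b'.repr.symm, fun z => rfl⟩
    refine ⟨U, ?_⟩
    intro x hx
    have hUco : ∀ (z : E) (i : S), ⟪w i, U z⟫_ℂ = ⟪e i, z⟫_ℂ := by
      intro z i
      rw [← hb'repr, hU, LinearIsometryEquiv.apply_symm_apply, hbrepr]
    obtain ⟨y, hy, α, hα, hfy, hcoef⟩ := hMain x hx
    have hyU : y = U (α • x) := by
      apply hwext
      intro i
      rw [hcoef i, hUco (α • x) i, hσ]
      exact Complex.re_add_im _
    have hUxne : U x ≠ 0 := by
      intro h
      exact hx (by rwa [LinearIsometryEquiv.map_eq_zero_iff] at h)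
    refine ⟨hUxne, ?_⟩
    rw [hfy, Projectivization.mk_eq_mk_iff]
    refine ⟨Units.mk0 α hα, ?_⟩
    show α • U x = y
    rw [hyU, map_smul]
  · right
    obtain ⟨U, hU⟩ : ∃ U : E ≃ₛₗᵢ[starRingEnd ℂ] E,
        ∀ z : E, U z = b'.repr.symm (starₗᵢ ℂ (b.repr z)) :=
      ⟨(b.repr.trans (starₗᵢ ℂ)).trans b'.repr.symm, fun z => rfl⟩
    refine ⟨U, ?_⟩
    intro x hx
    have hUco : ∀ (z : E) (i : S), ⟪w i, U z⟫_ℂ = (starRingEnd ℂ) (⟪e i, z⟫_ℂ) := by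
      intro z i
      rw [← hb'repr, hU, LinearIsometryEquiv.apply_symm_apply]
      have hs : (starₗᵢ ℂ (b.repr z)) i = (starRingEnd ℂ) (b.repr z i) := by
        simp [starₗᵢ]
      rw [hs, hbrepr]
    obtain ⟨y, hy, α, hα, hfy, hcoef⟩ := hMain x hx
    have hyU : y = U (α • x) := by
      apply hwext
      intro i
      rw [hcoef i, hUco (α • x) i, hσ]
      exact conj_eq' _
    have hUxne : U x ≠ 0 := by
      intro h
      exact hx (by rwa [LinearIsometryEquiv.map_eq_zero_iff] at h)
    refine ⟨hUxne, ?_⟩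
    rw [hfy, Projectivization.mk_eq_mk_iff]
    have hαc : (starRingEnd ℂ) α ≠ 0 := by
      intro h
      apply hα
      have := congrArg (starRingEnd ℂ) h
      simpa using this
    refine ⟨Units.mk0 _ hαc, ?_⟩
    show (starRingEnd ℂ) α • U x = y
    rw [hyU, map_smulₛₗ]
end

section
/- Noether's first theorem for internal symmetries of a first-order field theory: Let m be a positive integer and let L : (Fin m → ℝ) × (Fin 4 → (Fin m → ℝ)) → ℝ be a C² Lagrangian L(u, p), where u is the field value and p μ represents the partial derivative of the field in direction μ. Let φ : (Fin 4 → ℝ) → (Fin m → ℝ) be a C² field, write ∂_μ φ(x) for the derivative of φ at x in the μ-th coordinate direction, and suppose φ satisfies the Euler–Lagrange equations: for every x, the partial differential of L in the u-variable at (φ(x), ∂φ(x)) equals the sum over μ of the partial derivative in direction μ of the map x ↦ (partial differential of L in the p μ-variable at (φ(x), ∂φ(x))), as linear functionals on Fin m → ℝ. Let Z : (Fin m → ℝ) → (Fin m → ℝ) be a C¹ infinitesimal symmetry, meaning that for all (u, p): (D_u L)(u,p)(Z(u)) + Σ_μ (D_{p μ} L)(u,p)((DZ)(u)(p μ)) =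 0, where D_u and D_{p μ} denote the partial differentials of L and DZ the differential of Z. Define the Noether current j : (Fin 4 → ℝ) → (Fin 4 → ℝ) by j(x)(μ) = −(D_{p μ} L)(φ(x), ∂φ(x))(Z(φ(x))). Then j is divergence-free: for every x, Σ_μ ∂_μ (j(·)(μ))(x) = 0. -/
noncomputable def Tsingle (m : ℕ) (μ : Fin 4) :
    (Fin m → ℝ) →L[ℝ] ((Fin m → ℝ) × (Fin 4 → (Fin m → ℝ))) :=
  (ContinuousLinearMap.inr ℝ _ _).comp
    (ContinuousLinearMap.pi (fun ν => if ν = μ then ContinuousLinearMap.id ℝ _ else 0))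

theorem Tsingle_apply {m : ℕ} (μ : Fin 4) (v : Fin m → ℝ) :
    Tsingle m μ v = (0, Pi.single μ v) := by
  ext
  · rfl
  · rename_i ν _
    by_cases h : ν = μ <;>
      simp [Tsingle, ContinuousLinearMap.pi_apply, h, Pi.single, Function.update]

theorem DpL_formula {m : ℕ} (L : (Fin m → ℝ) × (Fin 4 → (Fin m → ℝ)) → ℝ)
    (hL : Differentiable ℝ L) (μ : Fin 4) (u : Fin m → ℝ) (p : Fin 4 → (Fin m → ℝ)) :
    fderiv ℝ (fun q => L (u, Function.update p μ q)) (p μ)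
      = (fderiv ℝ L (u, p)).comp (Tsingle m μ) := by
  have hι : (fun q => (u, Function.update p μ q))
      = fun q => ((u, p) - Tsingle m μ (p μ)) + Tsingle m μ q := by
    funext q
    rw [Tsingle_apply, Tsingle_apply]
    refine Prod.ext (by simp) ?_
    funext ν
    by_cases h : ν = μ <;>
      simp [Function.update, h, Pi.single_eq_same, Pi.single_eq_of_ne]
  have h1 : HasFDerivAt (fun q => (u, Function.update p μ q)) (Tsingle m μ) (p μ) := by
    rw [hι]
    exact (Tsingle m μ).hasFDerivAt.const_add _
  have h2 : HasFDerivAt (fun q => L (u, Function.update p μ q))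
      ((fderiv ℝ L (u, p)).comp (Tsingle m μ)) (p μ) := by
    have hLp : HasFDerivAt L (fderiv ℝ L (u, p)) (u, Function.update p μ (p μ)) := by
      rw [Function.update_eq_self]
      exact (hL (u, p)).hasFDerivAt
    exact HasFDerivAt.comp (𝕜 := ℝ) (f := fun q => (u, Function.update p μ q)) (p μ) hLp h1
  exact h2.fderiv

/-- **Noether's first theorem** for an internal symmetry of a first-order field theory.
`L (u, p)` is a `C²` Lagrangian on field values `u : Fin m → ℝ` and gradients
`p : Fin 4 → (Fin m → ℝ)`; `φ` is a `C²` field on space-time `Fin 4 → ℝ` satisfying the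
Euler–Lagrange equations, and `Z` is a `C¹` infinitesimal symmetry of `L`.
Then the Noether current `j x μ = −(D_{p μ}L)(φ x, ∂φ x)(Z (φ x))` is divergence-free. -/
theorem noether_first_theorem
    (m : ℕ) (hm : 0 < m)
    (L : (Fin m → ℝ) × (Fin 4 → (Fin m → ℝ)) → ℝ) (hL : ContDiff ℝ 2 L)
    (φ : (Fin 4 → ℝ) → (Fin m → ℝ)) (hφ : ContDiff ℝ 2 φ)
    -- partial differential of `L` in the field-value variable `u`
    (DuL : (Fin m → ℝ) → (Fin 4 → (Fin m → ℝ)) → ((Fin m → ℝ) →L[ℝ] ℝ))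
    (hDuL : ∀ u p, DuL u p = fderiv ℝ (fun u' => L (u', p)) u)
    -- partial differential of `L` in the `μ`-th slot of the gradient variable
    (DpL : Fin 4 → (Fin m → ℝ) → (Fin 4 → (Fin m → ℝ)) → ((Fin m → ℝ) →L[ℝ] ℝ))
    (hDpL : ∀ μ u p, DpL μ u p = fderiv ℝ (fun q => L (u, Function.update p μ q)) (p μ))
    -- the gradient `∂φ` of the field: `Dφ x μ = ∂_μ φ (x)`
    (Dφ : (Fin 4 → ℝ) → (Fin 4 → (Fin m → ℝ)))
    (hDφ : ∀ x μ, Dφ x μ = fderiv ℝ φ x (Pi.single μ 1))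
    -- Euler–Lagrange equations
    (hEL : ∀ x : Fin 4 → ℝ, DuL (φ x) (Dφ x)
        = ∑ μ : Fin 4, fderiv ℝ (fun y => DpL μ (φ y) (Dφ y)) x (Pi.single μ 1))
    -- `Z` is a `C¹` infinitesimal internal symmetry of `L`
    (Z : (Fin m → ℝ) → (Fin m → ℝ)) (hZ : ContDiff ℝ 1 Z)
    (hsym : ∀ (u : Fin m → ℝ) (p : Fin 4 → (Fin m → ℝ)),
      DuL u p (Z u) + ∑ μ : Fin 4, DpL μ u p (fderiv ℝ Z u (p μ)) = 0)
    -- the Noether current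
    (j : (Fin 4 → ℝ) → (Fin 4 → ℝ))
    (hj : ∀ x μ, j x μ = -(DpL μ (φ x) (Dφ x)) (Z (φ x))) :
    -- conclusion: the current is divergence-free
    ∀ x : Fin 4 → ℝ, ∑ μ : Fin 4, fderiv ℝ (fun y => j y μ) x (Pi.single μ 1) = 0 := by
  intro x
  have hLd : Differentiable ℝ L := (hL.of_le one_le_two).differentiable one_ne_zero
  -- `Dφ` is `C¹`
  have hDφc : ContDiff ℝ 1 Dφ := by
    have hrw : Dφ = fun y => fun μ => fderiv ℝ φ y (Pi.single μ 1) :=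
      funext fun y => funext fun μ => hDφ y μ
    rw [hrw]
    exact contDiff_pi.mpr fun μ =>
      (hφ.fderiv_right (by norm_num)).clm_apply contDiff_const
  -- the pair map y ↦ (φ y, Dφ y) is C¹
  have hΦ : ContDiff ℝ 1 (fun y => (φ y, Dφ y)) := ContDiff.prodMk (hφ.of_le one_le_two) hDφc
  -- the coefficient maps c μ are C¹
  have hcrw : ∀ μ, (fun y => DpL μ (φ y) (Dφ y))
      = fun y => (fderiv ℝ L (φ y, Dφ y)).comp (Tsingle m μ) := by
    intro μ
    funext y
    rw [hDpL, DpL_formula L hLd]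
  have hc : ∀ μ, ContDiff ℝ 1 (fun y => DpL μ (φ y) (Dφ y)) := by
    intro μ
    rw [hcrw μ]
    exact ((hL.fderiv_right le_rfl).comp hΦ).clm_comp contDiff_const
  -- derivative of g = Z ∘ φ
  have hg : HasFDerivAt (fun y => Z (φ y)) ((fderiv ℝ Z (φ x)).comp (fderiv ℝ φ x)) x :=
    HasFDerivAt.comp x (hZ.differentiable one_ne_zero (φ x)).hasFDerivAt
      ((hφ.differentiable two_ne_zero x).hasFDerivAt)
  -- per-μ computation of the divergence term
  have key : ∀ μ : Fin 4, fderiv ℝ (fun y => j y μ) x (Pi.single μ 1)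
      = -((fderiv ℝ (fun y => DpL μ (φ y) (Dφ y)) x (Pi.single μ 1)) (Z (φ x))
          + (DpL μ (φ x) (Dφ x)) (fderiv ℝ Z (φ x) (Dφ x μ))) := by
    intro μ
    have hcd : HasFDerivAt (fun y => DpL μ (φ y) (Dφ y))
        (fderiv ℝ (fun y => DpL μ (φ y) (Dφ y)) x) x :=
      ((hc μ).differentiable one_ne_zero x).hasFDerivAt
    have hprod := hcd.clm_apply hg
    have hjrw : (fun y => j y μ) = fun y => -((DpL μ (φ y) (Dφ y)) (Z (φ y))) :=
      funext fun y => hj y μ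
    have hjd : HasFDerivAt (fun y => j y μ)
        (-((DpL μ (φ x) (Dφ x)).comp ((fderiv ℝ Z (φ x)).comp (fderiv ℝ φ x))
          + (fderiv ℝ (fun y => DpL μ (φ y) (Dφ y)) x).flip (Z (φ x)))) x := by
      rw [hjrw]
      exact hprod.neg
    rw [hjd.fderiv]
    simp only [ContinuousLinearMap.neg_apply, ContinuousLinearMap.add_apply,
      ContinuousLinearMap.comp_apply, ContinuousLinearMap.flip_apply]
    rw [← hDφ x μ]
    ring
  simp only [key]
  have hELx := hEL x
  have hsum : ∑ μ : Fin 4,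
      (fderiv ℝ (fun y => DpL μ (φ y) (Dφ y)) x (Pi.single μ 1)) (Z (φ x))
      = DuL (φ x) (Dφ x) (Z (φ x)) := by
    rw [hELx, ContinuousLinearMap.sum_apply]
  rw [Finset.sum_neg_distrib, neg_eq_zero, Finset.sum_add_distrib, hsum, hsym]
end

section
/- Bessel–Hagen's generalization of Noether's first theorem (invariance up to a total divergence): With the same setting as Noether's first theorem — L : (Fin m → ℝ) × (Fin 4 → (Fin m → ℝ)) → ℝ a C² Lagrangian, φ a C² field satisfying the Euler–Lagrange equations, Z : (Fin m → ℝ) → (Fin m → ℝ) a C¹ vector field on field space — suppose now that there exist C¹ functions k_μ : (Fin m → ℝ) → ℝ for μ ∈ Fin 4 such that for all (u,p): (D_u L)(u,p)(Z(u)) + Σ_μ (D_{p μ} L)(u,p)((DZ)(u)(p μ)) = Σ_μ (Dk_μ)(u)(p μ). Then the modified current j(x)(μ) = −(D_{p μ} L)(φ(x), ∂φ(x))(Z(φ(x))) + k_μ(φ(x)) is divergence-free: for every x, Σ_μ ∂_μ (j(·)(μ))(x) = 0. -/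
/-- **Bessel–Hagen's generalization of Noether's first theorem** (invariance up to a
total divergence). Same setting as Noether's first theorem, but the infinitesimal
transformation `Z` leaves the Lagrangian invariant only up to a total divergence
`Σ_μ (Dk_μ)(u)(p μ)`. Then the modified current
`j x μ = −(D_{p μ}L)(φ x, ∂φ x)(Z (φ x)) + k_μ(φ x)` is divergence-free. -/
theorem bessel_hagen_noether
    (m : ℕ) (hm : 0 < m)
    (L : (Fin m → ℝ) × (Fin 4 → (Fin m → ℝ)) → ℝ) (hL : ContDiff ℝ 2 L)
    (φ : (Fin 4 → ℝ) → (Fin m → ℝ)) (hφ : ContDiff ℝ 2 φ)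
    -- partial differential of `L` in the field-value variable `u`
    (DuL : (Fin m → ℝ) → (Fin 4 → (Fin m → ℝ)) → ((Fin m → ℝ) →L[ℝ] ℝ))
    (hDuL : ∀ u p, DuL u p = fderiv ℝ (fun u' => L (u', p)) u)
    -- partial differential of `L` in the `μ`-th slot of the gradient variable
    (DpL : Fin 4 → (Fin m → ℝ) → (Fin 4 → (Fin m → ℝ)) → ((Fin m → ℝ) →L[ℝ] ℝ))
    (hDpL : ∀ μ u p, DpL μ u p = fderiv ℝ (fun q => L (u, Function.update p μ q)) (p μ))
    -- the gradient `∂φ` of the field: `Dφ x μ = ∂_μ φ (x)`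
    (Dφ : (Fin 4 → ℝ) → (Fin 4 → (Fin m → ℝ)))
    (hDφ : ∀ x μ, Dφ x μ = fderiv ℝ φ x (Pi.single μ 1))
    -- Euler–Lagrange equations
    (hEL : ∀ x : Fin 4 → ℝ, DuL (φ x) (Dφ x)
        = ∑ μ : Fin 4, fderiv ℝ (fun y => DpL μ (φ y) (Dφ y)) x (Pi.single μ 1))
    -- `Z` is a `C¹` vector field on field space
    (Z : (Fin m → ℝ) → (Fin m → ℝ)) (hZ : ContDiff ℝ 1 Z)
    -- the `C¹` functions `k_μ`: invariance up to a total divergence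
    (k : Fin 4 → (Fin m → ℝ) → ℝ) (hk : ∀ μ, ContDiff ℝ 1 (k μ))
    (hsym : ∀ (u : Fin m → ℝ) (p : Fin 4 → (Fin m → ℝ)),
      DuL u p (Z u) + ∑ μ : Fin 4, DpL μ u p (fderiv ℝ Z u (p μ))
        = ∑ μ : Fin 4, fderiv ℝ (k μ) u (p μ))
    -- the modified Noether current
    (j : (Fin 4 → ℝ) → (Fin 4 → ℝ))
    (hj : ∀ x μ, j x μ = -(DpL μ (φ x) (Dφ x)) (Z (φ x)) + k μ (φ x)) :
    -- conclusion: the current is divergence-free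
    ∀ x : Fin 4 → ℝ, ∑ μ : Fin 4, fderiv ℝ (fun y => j y μ) x (Pi.single μ 1) = 0 := by
  classical
  intro x
  -- basic smoothness facts
  have hφ1 : ContDiff ℝ 1 φ := hφ.of_le (by norm_num)
  have hφd : Differentiable ℝ φ := hφ1.differentiable one_ne_zero
  have hφ2 : ContDiff ℝ (1 + 1) φ := hφ.of_le (by norm_num)
  have hfdφ : ContDiff ℝ 1 (fderiv ℝ φ) := (contDiff_succ_iff_fderiv.mp hφ2).2.2
  have hL2 : ContDiff ℝ (1 + 1) L := hL.of_le (by norm_num)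
  have hLd : Differentiable ℝ L := hL.differentiable (by norm_num)
  have hfdL : ContDiff ℝ 1 (fderiv ℝ L) := (contDiff_succ_iff_fderiv.mp hL2).2.2
  -- `Dφ` is C¹
  have hDφfun : Dφ = fun y => fun μ => fderiv ℝ φ y (Pi.single μ 1) := by
    funext y μ; exact hDφ y μ
  have hDφ1 : ContDiff ℝ 1 Dφ := by
    rw [hDφfun]
    exact contDiff_pi.mpr fun μ => hfdφ.clm_apply contDiff_const
  -- the pair `(φ, Dφ)` is C¹
  have hΦ : ContDiff ℝ 1 (fun y => (φ y, Dφ y)) := hφ1.prodMk hDφ1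
  -- the embedding of the μ-th gradient slot
  set ι : Fin 4 → ((Fin m → ℝ) →L[ℝ] ((Fin m → ℝ) × (Fin 4 → Fin m → ℝ))) :=
    fun μ => (ContinuousLinearMap.inr ℝ (Fin m → ℝ) (Fin 4 → Fin m → ℝ)).comp
      (ContinuousLinearMap.pi (Pi.single μ (ContinuousLinearMap.id ℝ (Fin m → ℝ)))) with hι
  -- structure of `DpL`
  have hDpL_eq : ∀ (μ : Fin 4) (u : Fin m → ℝ) (p : Fin 4 → (Fin m → ℝ)),
      DpL μ u p = (fderiv ℝ L (u, p)).comp (ι μ) := by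
    intro μ u p
    rw [hDpL]
    have hg : HasFDerivAt
        (fun q : Fin m → ℝ => ((u, Function.update p μ q) : (Fin m → ℝ) × (Fin 4 → Fin m → ℝ)))
        (ι μ) (p μ) := by
      have h1 := (hasFDerivAt_const (𝕜 := ℝ) u (p μ)).prodMk
        (hasFDerivAt_update p (p μ) (i := μ))
      exact h1.congr_fderiv (ContinuousLinearMap.ext fun v => by simp [hι])
    have hLd' : HasFDerivAt L (fderiv ℝ L (u, p)) (u, Function.update p μ (p μ)) := by
      rw [Function.update_eq_self]
      exact (hLd _).hasFDerivAt
    exact (hLd'.comp (p μ) hg).fderiv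
  -- differentiability of the coefficient maps `A μ : y ↦ DpL μ (φ y) (Dφ y)`
  have hA : ∀ μ : Fin 4, DifferentiableAt ℝ (fun y => DpL μ (φ y) (Dφ y)) x := by
    intro μ
    have h1 : (fun y => DpL μ (φ y) (Dφ y))
        = fun y => (fderiv ℝ L (φ y, Dφ y)).comp (ι μ) := by
      funext y; exact hDpL_eq μ (φ y) (Dφ y)
    rw [h1]
    have h2 : ContDiff ℝ 1 (fun y => fderiv ℝ L (φ y, Dφ y)) := hfdL.comp hΦ
    exact ((h2.differentiable one_ne_zero) x).clm_comp (differentiableAt_const (ι μ))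
  -- differentiability of `Z ∘ φ` and its derivative
  have hZd : Differentiable ℝ Z := hZ.differentiable one_ne_zero
  have hgd : DifferentiableAt ℝ (fun y => Z (φ y)) x := (hZd (φ x)).comp x (hφd x)
  have hgfd : fderiv ℝ (fun y => Z (φ y)) x = (fderiv ℝ Z (φ x)).comp (fderiv ℝ φ x) :=
    fderiv_comp x (hZd (φ x)) (hφd x)
  -- compute the divergence term by term
  have key : ∀ μ : Fin 4, fderiv ℝ (fun y => j y μ) x (Pi.single μ 1)
      = -((fderiv ℝ (fun y => DpL μ (φ y) (Dφ y)) x (Pi.single μ 1)) (Z (φ x)))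
        - DpL μ (φ x) (Dφ x) (fderiv ℝ Z (φ x) (Dφ x μ))
        + fderiv ℝ (k μ) (φ x) (Dφ x μ) := by
    intro μ
    have hjμ : (fun y => j y μ)
        = fun y => -(DpL μ (φ y) (Dφ y)) (Z (φ y)) + k μ (φ y) := by
      funext y; exact hj y μ
    have hP : DifferentiableAt ℝ (fun y => (DpL μ (φ y) (Dφ y)) (Z (φ y))) x :=
      (hA μ).clm_apply hgd
    have hK : DifferentiableAt ℝ (fun y => k μ (φ y)) x :=
      (((hk μ).differentiable one_ne_zero) (φ x)).comp x (hφd x)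
    have hKfd : fderiv ℝ (fun y => k μ (φ y)) x
        = (fderiv ℝ (k μ) (φ x)).comp (fderiv ℝ φ x) :=
      fderiv_comp x (((hk μ).differentiable one_ne_zero) (φ x)) (hφd x)
    have hPfd : fderiv ℝ (fun y => (DpL μ (φ y) (Dφ y)) (Z (φ y))) x
        = (DpL μ (φ x) (Dφ x)).comp (fderiv ℝ (fun y => Z (φ y)) x)
          + (fderiv ℝ (fun y => DpL μ (φ y) (Dφ y)) x).flip (Z (φ x)) :=
      fderiv_clm_apply (hA μ) hgd
    rw [hjμ, fderiv_fun_add (hP.fun_neg) hK, fderiv_fun_neg]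
    simp only [ContinuousLinearMap.add_apply, ContinuousLinearMap.neg_apply]
    rw [hPfd, hKfd]
    simp only [ContinuousLinearMap.add_apply, ContinuousLinearMap.comp_apply,
      ContinuousLinearMap.flip_apply]
    rw [hgfd]
    simp only [ContinuousLinearMap.comp_apply]
    rw [← hDφ x μ]
    ring
  calc ∑ μ : Fin 4, fderiv ℝ (fun y => j y μ) x (Pi.single μ 1)
      = ∑ μ : Fin 4,
        (-((fderiv ℝ (fun y => DpL μ (φ y) (Dφ y)) x (Pi.single μ 1)) (Z (φ x)))
          - DpL μ (φ x) (Dφ x) (fderiv ℝ Z (φ x) (Dφ x μ))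
          + fderiv ℝ (k μ) (φ x) (Dφ x μ)) := by
        exact Finset.sum_congr rfl fun μ _ => key μ
    _ = -(DuL (φ x) (Dφ x) (Z (φ x)))
          - ∑ μ : Fin 4, DpL μ (φ x) (Dφ x) (fderiv ℝ Z (φ x) (Dφ x μ))
          + ∑ μ : Fin 4, fderiv ℝ (k μ) (φ x) (Dφ x μ) := by
        rw [Finset.sum_add_distrib, Finset.sum_sub_distrib, Finset.sum_neg_distrib,
          hEL x, ContinuousLinearMap.sum_apply]
    _ = 0 := by
        have := hsym (φ x) (Dφ x)
        linarith
end

section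
/- Translation invariance implies conservation of momentum: Let E = EuclideanSpace ℝ (Fin 3), let U : E → ℝ be differentiable with gradient ∇U, let m > 0, and let q : ℝ → E be twice differentiable satisfying Newton's equation m • q''(t) = −∇U(q(t)) for all t. Suppose U is invariant under translations in the direction of a vector e ∈ E: U(x + s • e) = U(x) for all x ∈ E and s ∈ ℝ. Then the momentum component t ↦ m * ⟪q'(t), e⟫ is constant. -/
/-- **Translation invariance implies conservation of momentum.**
Let `q : ℝ → ℝ³` satisfy Newton's equation `m q'' = −∇U(q)` for a differentiable
potential `U`. If `U` is invariant under translations in the direction `e`,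
then the momentum component `m ⟪q', e⟫` is constant in time. -/
theorem translation_invariance_momentum_conservation
    (U : EuclideanSpace ℝ (Fin 3) → ℝ) (hU : Differentiable ℝ U)
    (m : ℝ) (hm : 0 < m)
    (q : ℝ → EuclideanSpace ℝ (Fin 3))
    (hq : Differentiable ℝ q) (hq' : Differentiable ℝ (deriv q))
    -- Newton's equation m q'' = −∇U(q)
    (hnewton : ∀ t : ℝ, m • deriv (deriv q) t = -gradient U (q t))
    -- invariance of `U` under translations in the direction `e`
    (e : EuclideanSpace ℝ (Fin 3))
    (hinv : ∀ (x : EuclideanSpace ℝ (Fin 3)) (s : ℝ), U (x + s • e) = U x) :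
    -- conclusion: the momentum component `m ⟪q', e⟫` is constant
    ∀ t₁ t₂ : ℝ, m * (inner ℝ (deriv q t₁) e : ℝ) = m * (inner ℝ (deriv q t₂) e : ℝ) := by
  -- Step 1: ⟪∇U x, e⟫ = 0 for all x
  have hgrad : ∀ x : EuclideanSpace ℝ (Fin 3), (inner ℝ (gradient U x) e : ℝ) = 0 := by
    intro x
    have h1 : (inner ℝ (gradient U x) e : ℝ) = fderiv ℝ U x e := by
      rw [gradient, InnerProductSpace.toDual_symm_apply]
    have hc : HasDerivAt (fun s : ℝ => x + s • e) e 0 := by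
      simpa using ((hasDerivAt_id (0 : ℝ)).smul_const e).const_add x
    have h2 : HasDerivAt (fun s : ℝ => U (x + s • e)) (fderiv ℝ U x e) 0 := by
      have := ((hU (x + (0 : ℝ) • e)).hasFDerivAt.comp_hasDerivAt 0 hc)
      simp only [zero_smul, add_zero] at this
      exact this
    have h3 : (fun s : ℝ => U (x + s • e)) = fun _ => U x := funext fun s => hinv x s
    rw [h3] at h2
    have := h2.deriv
    simp at this
    rw [h1, ← this]
  -- Step 2: the momentum function has derivative 0
  have hd : ∀ t : ℝ, HasDerivAt (fun t => m * (inner ℝ (deriv q t) e : ℝ)) 0 t := by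
    intro t
    have h1 : HasDerivAt (fun t => (inner ℝ (deriv q t) e : ℝ))
        (inner ℝ (deriv (deriv q) t) e : ℝ) t := by
      have := ((hq' t).hasDerivAt).inner ℝ (hasDerivAt_const t e)
      simpa using this
    have h2 := h1.const_mul m
    have h3 : m * (inner ℝ (deriv (deriv q) t) e : ℝ) = 0 := by
      have : (inner ℝ (m • deriv (deriv q) t) e : ℝ) = m * inner ℝ (deriv (deriv q) t) e :=
        real_inner_smul_left _ _ _
      rw [← this, hnewton t, inner_neg_left, hgrad]
      ring
    rwa [h3] at h2
  intro t₁ t₂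
  have : ∀ t, deriv (fun t => m * (inner ℝ (deriv q t) e : ℝ)) t = 0 := fun t => (hd t).deriv
  exact is_const_of_deriv_eq_zero (fun t => (hd t).differentiableAt) this t₁ t₂
end
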